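/- arXiv:2109.14090 — 5 statements merged into one kernel-verified Lean document; each statement's English description precedes it below -/
import Mathlib

section
/- The reversible Gromov–Monge distance is symmetric: for any two network spaces (X, μ, c_X) and (Y, ν, c_Y), RGM(μ, ν) computed from (X, μ, c_X) to (Y, ν, c_Y) equals RGM(ν, μ) computed from (Y, ν, c_Y) to (X, μ, c_X). -/
/-! The binding constraint `(Id, F)_# μ = (B, Id)_# ν` is symmetric under swapping coordinates,
so `(F, B)` is admissible for `(μ, ν)` iff `(B, F)` is admissible for `(ν, μ)`. Its marginals give
`F_# μ = ν` and `B_# ν = μ`, and evaluating it on `{(x, y) | B y ≠ x}` gives `B ∘ F = id` μ-a.e.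
(symmetrically `F ∘ B = id` ν-a.e.). Hence `μ ⊗ ν` is the pushforward of `ν ⊗ μ` under `B × F`,
and after this change of variables the two costs have a.e. equal integrands. -/

open MeasureTheory
open scoped ENNReal

/-- The cost functional appearing in the reversible Gromov–Monge distance. -/
noncomputable def RGMcost {X Y : Type*} [MeasurableSpace X] [MeasurableSpace Y]
    (μ : Measure X) (ν : Measure Y) (cX : X → X → ℝ) (cY : Y → Y → ℝ)
    (F : X → Y) (B : Y → X) : ℝ≥0∞ :=
  (∫⁻ z, ENNReal.ofReal ((cX z.1 (B z.2) - cY (F z.1) z.2) ^ 2) ∂(μ.prod ν)) ^ (1 / 2 : ℝ)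

/-- The reversible Gromov–Monge (RGM) distance: the infimum of the RGM cost over all pairs
`(F, B)` of Borel measurable maps satisfying the binding constraint
`(Id, F)_# μ = (B, Id)_# ν`.  The infimum over the empty family is `⊤`. -/
noncomputable def RGM {X Y : Type*} [MeasurableSpace X] [MeasurableSpace Y]
    (μ : Measure X) (ν : Measure Y) (cX : X → X → ℝ) (cY : Y → Y → ℝ) : ℝ≥0∞ :=
  ⨅ p : {p : (X → Y) × (Y → X) // Measurable p.1 ∧ Measurable p.2 ∧
      μ.map (fun x => (x, p.1 x)) = ν.map (fun y => (p.2 y, y))},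
    RGMcost μ ν cX cY p.val.1 p.val.2

section BindingConstraint

variable {X Y : Type*} [MeasurableSpace X] [MeasurableSpace Y] {μ : Measure X} {ν : Measure Y}
  {F : X → Y} {B : Y → X}

lemma map_graph_swap (hF : Measurable F) (hB : Measurable B)
    (h : μ.map (fun x => (x, F x)) = ν.map (fun y => (B y, y))) :
    ν.map (fun y => (y, B y)) = μ.map (fun x => (F x, x)) := by
  have := congrArg (Measure.map Prod.swap) h
  rw [Measure.map_map measurable_swap (by fun_prop), Measure.map_map measurable_swap (by fun_prop)]
    at this
  exact this.symm

lemma map_eq_of_map_graph_eq (hF : Measurable F) (hB : Measurable B)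
    (h : μ.map (fun x => (x, F x)) = ν.map (fun y => (B y, y))) :
    μ.map F = ν := by
  have := congrArg (Measure.map Prod.snd) h
  rwa [Measure.map_map measurable_snd (by fun_prop), Measure.map_map measurable_snd (by fun_prop),
    Function.comp_def, Function.comp_def, Measure.map_id'] at this

lemma ae_leftInverse_of_map_graph_eq [MeasurableEq X] (hF : Measurable F) (hB : Measurable B)
    (h : μ.map (fun x => (x, F x)) = ν.map (fun y => (B y, y))) :
    ∀ᵐ x ∂μ, B (F x) = x := by
  have hS : MeasurableSet {p : X × Y | B p.2 ≠ p.1} :=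
    (measurableSet_eq_fun (hB.comp measurable_snd) measurable_fst).compl
  have := congrArg (· {p : X × Y | B p.2 ≠ p.1}) h
  rw [Measure.map_apply (by fun_prop) hS, Measure.map_apply (by fun_prop) hS] at this
  simpa [ae_iff] using this

lemma RGMcost_eq_of_map_graph_eq [SFinite μ] [SFinite ν] [MeasurableEq X] [MeasurableEq Y]
    {cX : X → X → ℝ} {cY : Y → Y → ℝ}
    (hcX : Measurable (Function.uncurry cX)) (hcY : Measurable (Function.uncurry cY))
    (hF : Measurable F) (hB : Measurable B)
    (h : μ.map (fun x => (x, F x)) = ν.map (fun y => (B y, y))) :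
    RGMcost μ ν cX cY F B = RGMcost ν μ cY cX B F := by
  have h' := map_graph_swap hF hB h
  have hprod : μ.prod ν = (ν.prod μ).map (Prod.map B F) := by
    rw [← Measure.map_prod_map _ _ hB hF, map_eq_of_map_graph_eq hF hB h,
      map_eq_of_map_graph_eq hB hF h']
  have hcost :
      Measurable fun z : X × Y => ENNReal.ofReal ((cX z.1 (B z.2) - cY (F z.1) z.2) ^ 2) :=
    ENNReal.measurable_ofReal.comp
      (((hcX.comp (measurable_fst.prodMk (hB.comp measurable_snd))).sub
        (hcY.comp ((hF.comp measurable_fst).prodMk measurable_snd))).pow_const 2)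
  have hinv : ∀ᵐ z ∂(ν.prod μ), F (B z.1) = z.1 ∧ B (F z.2) = z.2 :=
    (Measure.quasiMeasurePreserving_fst.ae (ae_leftInverse_of_map_graph_eq hB hF h')).and
      (Measure.quasiMeasurePreserving_snd.ae (ae_leftInverse_of_map_graph_eq hF hB h))
  rw [RGMcost, RGMcost, hprod, lintegral_map hcost (hB.prodMap hF)]
  congr 1
  refine lintegral_congr_ae (hinv.mono fun z hz => ?_)
  simp only [Prod.map_fst, Prod.map_snd, hz.1, hz.2]
  rw [← neg_sub, neg_sq]

end BindingConstraint

lemma RGM_le_RGM_swap {X Y : Type*} [MeasurableSpace X] [MeasurableSpace Y] [MeasurableEq X]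
    [MeasurableEq Y] (μ : Measure X) (ν : Measure Y) [SFinite μ] [SFinite ν]
    {cX : X → X → ℝ} {cY : Y → Y → ℝ}
    (hcX : Measurable (Function.uncurry cX)) (hcY : Measurable (Function.uncurry cY)) :
    RGM μ ν cX cY ≤ RGM ν μ cY cX := by
  refine le_iInf fun ⟨⟨G, H⟩, hG, hH, h⟩ => ?_
  have h' := map_graph_swap hG hH h
  calc RGM μ ν cX cY ≤ RGMcost μ ν cX cY H G := iInf_le_of_le ⟨(H, G), hH, hG, h'⟩ le_rfl
    _ = RGMcost ν μ cY cX G H := RGMcost_eq_of_map_graph_eq hcX hcY hH hG h'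

theorem rgm_symm_general
    {X Y : Type*}
    [MetricSpace X] [SecondCountableTopology X]
    [MeasurableSpace X] [BorelSpace X]
    [MetricSpace Y] [SecondCountableTopology Y]
    [MeasurableSpace Y] [BorelSpace Y]
    (μ : Measure X) (ν : Measure Y)
    [IsProbabilityMeasure μ] [IsProbabilityMeasure ν]
    (cX : X → X → ℝ) (cY : Y → Y → ℝ)
    (hcX : Measurable (Function.uncurry cX)) (hcY : Measurable (Function.uncurry cY)) :
    RGM μ ν cX cY = RGM ν μ cY cX :=
  le_antisymm (RGM_le_RGM_swap μ ν hcX hcY) (RGM_le_RGM_swap ν μ hcY hcX)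

/-- The reversible Gromov–Monge distance is symmetric: for network spaces
`(X, μ, c_X)` and `(Y, ν, c_Y)`, `RGM(μ, ν) = RGM(ν, μ)`. -/
theorem rgm_symm
    {X Y : Type*}
    [MetricSpace X] [CompleteSpace X] [SecondCountableTopology X]
    [MeasurableSpace X] [BorelSpace X]
    [MetricSpace Y] [CompleteSpace Y] [SecondCountableTopology Y]
    [MeasurableSpace Y] [BorelSpace Y]
    (μ : Measure X) (ν : Measure Y)
    [IsProbabilityMeasure μ] [IsProbabilityMeasure ν]
    [μ.IsOpenPosMeasure] [ν.IsOpenPosMeasure]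
    (cX : X → X → ℝ) (cY : Y → Y → ℝ)
    (hcX : Measurable (Function.uncurry cX)) (hcY : Measurable (Function.uncurry cY)) :
    RGM μ ν cX cY = RGM ν μ cY cX :=
  rgm_symm_general μ ν cX cY hcX hcY
end

section
/- The reversible Gromov–Monge distance satisfies the triangle inequality: for any three network spaces (X, μ_X, c_X), (Y, μ_Y, c_Y), (Z, μ_Z, c_Z), one has RGM(μ_X, μ_Z) ≤ RGM(μ_X, μ_Y) + RGM(μ_Y, μ_Z) (with the convention inf ∅ = +∞ and the usual extended-real arithmetic). -/
open MeasureTheory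
open scoped ENNReal

/-! If `(F₁, B₁) ∈ I(μ, ν)` and `(F₂, B₂) ∈ I(ν, ρ)`, then `(F₂ ∘ F₁, B₁ ∘ B₂) ∈ I(μ, ρ)`, and its
distortion at `(x, z)` is the distortion of `(F₁, B₁)` at `(x, B₂ z)` plus that of `(F₂, B₂)` at
`(F₁ x, z)`. Minkowski's inequality in `L²(μ ⊗ ρ)` splits the cost accordingly; since `F₁` pushes
`μ` to `ν` and `B₂` pushes `ρ` to `ν`, the maps `id × B₂` and `F₁ × id` push `μ ⊗ ρ` to `μ ⊗ ν` and
`ν ⊗ ρ`, so the two pieces are exactly the costs of the two pairs. -/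

section ReversiblePair

variable {X Y Z : Type*} [MeasurableSpace X] [MeasurableSpace Y] [MeasurableSpace Z]
  {μ : Measure X} {ν : Measure Y} {ρ : Measure Z}

/-- `(F, B) ∈ I(μ, ν)`, the index set of the infimum defining `RGM μ ν`. -/
def IsReversiblePair (μ : Measure X) (ν : Measure Y) (F : X → Y) (B : Y → X) : Prop :=
  Measurable F ∧ Measurable B ∧ μ.map (fun x => (x, F x)) = ν.map (fun y => (B y, y))

namespace IsReversiblePair

variable {F : X → Y} {B : Y → X}

theorem measurable_forward_graph (h : IsReversiblePair μ ν F B) : Measurable fun x => (x, F x) :=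
  measurable_id.prodMk h.1

theorem measurable_backward_graph (h : IsReversiblePair μ ν F B) : Measurable fun y => (B y, y) :=
  h.2.1.prodMk measurable_id

theorem map_forward_eq (h : IsReversiblePair μ ν F B) : μ.map F = ν := by
  have := congrArg (Measure.map Prod.snd) h.2.2
  rwa [Measure.map_map measurable_snd h.measurable_forward_graph,
    Measure.map_map measurable_snd h.measurable_backward_graph, Function.comp_def,
    Function.comp_def, Measure.map_id'] at this

theorem map_backward_eq (h : IsReversiblePair μ ν F B) : ν.map B = μ := by
  have := congrArg (Measure.map Prod.fst) h.2.2
  rw [Measure.map_map measurable_fst h.measurable_forward_graph,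
    Measure.map_map measurable_fst h.measurable_backward_graph, Function.comp_def,
    Function.comp_def, Measure.map_id'] at this
  exact this.symm

theorem comp {F' : Y → Z} {B' : Z → Y} (h : IsReversiblePair μ ν F B)
    (h' : IsReversiblePair ν ρ F' B') : IsReversiblePair μ ρ (F' ∘ F) (B ∘ B') := by
  have hF' : Measurable (Prod.map (id : X → X) F') := measurable_id.prodMap h'.1
  have hB : Measurable (Prod.map B (id : Z → Z)) := h.2.1.prodMap measurable_id
  refine ⟨h'.1.comp h.1, h.2.1.comp h'.2.1, ?_⟩
  calc μ.map (fun x => (x, F' (F x)))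
      = (μ.map (fun x => (x, F x))).map (Prod.map id F') := by
        rw [Measure.map_map hF' h.measurable_forward_graph]; rfl
    _ = (ν.map (fun y => (y, F' y))).map (Prod.map B id) := by
        rw [h.2.2, Measure.map_map hF' h.measurable_backward_graph,
          Measure.map_map hB h'.measurable_forward_graph]; rfl
    _ = ρ.map (fun z => (B (B' z), z)) := by
        rw [h'.2.2, Measure.map_map hB h'.measurable_backward_graph]; rfl

end IsReversiblePair

theorem RGM_le_RGMcost {cX : X → X → ℝ} {cY : Y → Y → ℝ} {F : X → Y} {B : Y → X}
    (h : IsReversiblePair μ ν F B) : RGM μ ν cX cY ≤ RGMcost μ ν cX cY F B :=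
  iInf_le (fun p : {p : (X → Y) × (Y → X) // IsReversiblePair μ ν p.1 p.2} =>
    RGMcost μ ν cX cY p.val.1 p.val.2) ⟨(F, B), h⟩

end ReversiblePair

theorem eLpNorm_comp_prodMap {α β γ δ E : Type*} [MeasurableSpace α] [MeasurableSpace β]
    [MeasurableSpace γ] [MeasurableSpace δ] [NormedAddCommGroup E] {μ : Measure α}
    {ν : Measure γ} [SFinite μ] [SFinite ν] {f : α → β} {g : γ → δ} {u : β × δ → E}
    (hf : Measurable f) (hg : Measurable g)
    (hu : AEStronglyMeasurable u ((μ.map f).prod (ν.map g))) (p : ℝ≥0∞) :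
    eLpNorm (u ∘ Prod.map f g) p (μ.prod ν) = eLpNorm u p ((μ.map f).prod (ν.map g)) := by
  rw [Measure.map_prod_map μ ν hf hg] at hu ⊢
  exact (eLpNorm_map_measure hu (hf.prodMap hg).aemeasurable).symm

section Distortion

variable {X Y Z : Type*}

def distortion (cX : X → X → ℝ) (cY : Y → Y → ℝ) (F : X → Y) (B : Y → X) : X × Y → ℝ :=
  fun p => cX p.1 (B p.2) - cY (F p.1) p.2

theorem distortion_comp (cX : X → X → ℝ) (cY : Y → Y → ℝ) (cZ : Z → Z → ℝ) (F : X → Y)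
    (B : Y → X) (F' : Y → Z) (B' : Z → Y) :
    distortion cX cZ (F' ∘ F) (B ∘ B') =
      distortion cX cY F B ∘ Prod.map id B' + distortion cY cZ F' B' ∘ Prod.map F id := by
  ext p
  simp only [distortion, Function.comp_apply, Pi.add_apply, Prod.map_fst, Prod.map_snd, id]
  ring

variable [MeasurableSpace X] [MeasurableSpace Y]

theorem RGMcost_eq_eLpNorm (μ : Measure X) (ν : Measure Y) (cX : X → X → ℝ) (cY : Y → Y → ℝ)
    (F : X → Y) (B : Y → X) :
    RGMcost μ ν cX cY F B = eLpNorm (distortion cX cY F B) 2 (μ.prod ν) := by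
  rw [eLpNorm_eq_lintegral_rpow_enorm_toReal two_ne_zero ENNReal.ofNat_ne_top, RGMcost]
  congr 2 with p
  rw [Real.enorm_eq_ofReal_abs, ENNReal.toReal_ofNat, ENNReal.rpow_two,
    ← ENNReal.ofReal_pow (abs_nonneg _), sq_abs, distortion]

theorem measurable_distortion {cX : X → X → ℝ} {cY : Y → Y → ℝ} {F : X → Y} {B : Y → X}
    (hcX : Measurable (Function.uncurry cX)) (hcY : Measurable (Function.uncurry cY))
    (hF : Measurable F) (hB : Measurable B) : Measurable (distortion cX cY F B) :=
  (hcX.comp (measurable_fst.prodMk (hB.comp measurable_snd))).sub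
    (hcY.comp ((hF.comp measurable_fst).prodMk measurable_snd))

variable [MeasurableSpace Z]

theorem RGMcost_comp_le {μ : Measure X} {ν : Measure Y} {ρ : Measure Z} [SFinite μ] [SFinite ρ]
    {cX : X → X → ℝ} {cY : Y → Y → ℝ} {cZ : Z → Z → ℝ}
    (hcX : Measurable (Function.uncurry cX)) (hcY : Measurable (Function.uncurry cY))
    (hcZ : Measurable (Function.uncurry cZ)) {F : X → Y} {B : Y → X} {F' : Y → Z} {B' : Z → Y}
    (h : IsReversiblePair μ ν F B) (h' : IsReversiblePair ν ρ F' B') :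
    RGMcost μ ρ cX cZ (F' ∘ F) (B ∘ B') ≤ RGMcost μ ν cX cY F B + RGMcost ν ρ cY cZ F' B' := by
  have hd := measurable_distortion hcX hcY h.1 h.2.1
  have hd' := measurable_distortion hcY hcZ h'.1 h'.2.1
  have hB' : Measurable (Prod.map (id : X → X) B') := measurable_id.prodMap h'.2.1
  have hF : Measurable (Prod.map F (id : Z → Z)) := h.1.prodMap measurable_id
  have hμν : (μ.map id).prod (ρ.map B') = μ.prod ν := by rw [Measure.map_id, h'.map_backward_eq]
  have hνρ : (μ.map F).prod (ρ.map id) = ν.prod ρ := by rw [Measure.map_id, h.map_forward_eq]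
  rw [RGMcost_eq_eLpNorm, RGMcost_eq_eLpNorm, RGMcost_eq_eLpNorm, distortion_comp, ← hμν, ← hνρ,
    ← eLpNorm_comp_prodMap measurable_id h'.2.1 hd.aestronglyMeasurable,
    ← eLpNorm_comp_prodMap h.1 measurable_id hd'.aestronglyMeasurable]
  exact eLpNorm_add_le (hd.comp hB').aestronglyMeasurable (hd'.comp hF).aestronglyMeasurable
    one_le_two

end Distortion

theorem rgm_triangle_general
    {X Y Z : Type*}
    [MeasurableSpace X]
    [MeasurableSpace Y]
    [MeasurableSpace Z]
    (μX : Measure X) (μY : Measure Y) (μZ : Measure Z)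
    [IsProbabilityMeasure μX] [IsProbabilityMeasure μZ]
    (cX : X → X → ℝ) (cY : Y → Y → ℝ) (cZ : Z → Z → ℝ)
    (hcX : Measurable (Function.uncurry cX)) (hcY : Measurable (Function.uncurry cY))
    (hcZ : Measurable (Function.uncurry cZ)) :
    RGM μX μZ cX cZ ≤ RGM μX μY cX cY + RGM μY μZ cY cZ :=
  ENNReal.le_iInf_add_iInf fun p q =>
    (RGM_le_RGMcost (IsReversiblePair.comp p.2 q.2)).trans
      (RGMcost_comp_le hcX hcY hcZ p.2 q.2)

/-- The reversible Gromov–Monge distance satisfies the triangle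
inequality: `RGM(μ_X, μ_Z) ≤ RGM(μ_X, μ_Y) + RGM(μ_Y, μ_Z)` (extended-real arithmetic). -/
theorem rgm_triangle
    {X Y Z : Type*}
    [MetricSpace X] [CompleteSpace X] [SecondCountableTopology X]
    [MeasurableSpace X] [BorelSpace X]
    [MetricSpace Y] [CompleteSpace Y] [SecondCountableTopology Y]
    [MeasurableSpace Y] [BorelSpace Y]
    [MetricSpace Z] [CompleteSpace Z] [SecondCountableTopology Z]
    [MeasurableSpace Z] [BorelSpace Z]
    (μX : Measure X) (μY : Measure Y) (μZ : Measure Z)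
    [IsProbabilityMeasure μX] [IsProbabilityMeasure μY] [IsProbabilityMeasure μZ]
    [μX.IsOpenPosMeasure] [μY.IsOpenPosMeasure] [μZ.IsOpenPosMeasure]
    (cX : X → X → ℝ) (cY : Y → Y → ℝ) (cZ : Z → Z → ℝ)
    (hcX : Measurable (Function.uncurry cX)) (hcY : Measurable (Function.uncurry cY))
    (hcZ : Measurable (Function.uncurry cZ)) :
    RGM μX μZ cX cZ ≤ RGM μX μY cX cY + RGM μY μZ cY cZ :=
  rgm_triangle_general μX μY μZ cX cY cZ hcX hcY hcZ
end

section
/- Binding pairs compose: let (X, μ_X), (Y, μ_Y), (Z, μ_Z) be complete separable metric spaces equipped with Borel probability measures, and let F_Y : X → Y, B_X : Y → X, F_Z : Y → Z, B_Y : Z → Y be Borel measurable maps. If (Id, F_Y)_#μ_X = (B_X, Id)_#μ_Y as measures on X × Y and (Id, F_Z)_#μ_Y = (B_Y, Id)_#μ_Z as measures on Y × Z, then (Id, F_Z ∘ F_Y)_#μ_X = (B_X ∘ B_Y, Id)_#μ_Z as measures on X × Z. -/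
open MeasureTheory

/-!
Both sides equal `(B_X, F_Z)_# μ_Y`: push the first hypothesis forward by `Id × F_Z`
and the second by `B_X × Id`.
-/

namespace MeasureTheory.Measure

variable {α β γ β' γ' : Type*} [MeasurableSpace α] [MeasurableSpace β] [MeasurableSpace γ]
  [MeasurableSpace β'] [MeasurableSpace γ']

theorem map_prodMap_map_prodMk {μ : Measure α} {f : α → β} {g : α → γ} {p : β → β'}
    {q : γ → γ'} (hp : Measurable p) (hq : Measurable q) (hf : AEMeasurable f μ)
    (hg : AEMeasurable g μ) :
    (μ.map fun x => (f x, g x)).map (Prod.map p q) = μ.map fun x => (p (f x), q (g x)) :=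
  AEMeasurable.map_map_of_aemeasurable (hp.prodMap hq).aemeasurable (hf.prodMk hg)

end MeasureTheory.Measure

open Measure in
theorem binding_pairs_compose_general
    {X Y Z : Type*}
    [MeasurableSpace X]
    [MeasurableSpace Y]
    [MeasurableSpace Z]
    (μX : Measure X) (μY : Measure Y) (μZ : Measure Z)
    (FY : X → Y) (BX : Y → X) (FZ : Y → Z) (BY : Z → Y)
    (hFY : Measurable FY) (hBX : Measurable BX) (hFZ : Measurable FZ) (hBY : Measurable BY)
    (h1 : μX.map (fun x => (x, FY x)) = μY.map (fun y => (BX y, y)))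
    (h2 : μY.map (fun y => (y, FZ y)) = μZ.map (fun z => (BY z, z))) :
    μX.map (fun x => (x, FZ (FY x))) = μZ.map (fun z => (BX (BY z), z)) := by
  calc μX.map (fun x => (x, FZ (FY x)))
      = (μX.map fun x => (x, FY x)).map (Prod.map id FZ) :=
        (map_prodMap_map_prodMk measurable_id hFZ aemeasurable_id hFY.aemeasurable).symm
    _ = (μY.map fun y => (BX y, y)).map (Prod.map id FZ) := by rw [h1]
    _ = μY.map (fun y => (BX y, FZ y)) :=
        map_prodMap_map_prodMk measurable_id hFZ hBX.aemeasurable aemeasurable_id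
    _ = (μY.map fun y => (y, FZ y)).map (Prod.map BX id) :=
        (map_prodMap_map_prodMk hBX measurable_id aemeasurable_id hFZ.aemeasurable).symm
    _ = (μZ.map fun z => (BY z, z)).map (Prod.map BX id) := by rw [h2]
    _ = μZ.map (fun z => (BX (BY z), z)) :=
        map_prodMap_map_prodMk hBX measurable_id hBY.aemeasurable aemeasurable_id

/-- Binding pairs compose: if `(Id, F_Y)_# μ_X = (B_X, Id)_# μ_Y` and
`(Id, F_Z)_# μ_Y = (B_Y, Id)_# μ_Z`, then
`(Id, F_Z ∘ F_Y)_# μ_X = (B_X ∘ B_Y, Id)_# μ_Z`. -/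
theorem binding_pairs_compose
    {X Y Z : Type*}
    [MetricSpace X] [CompleteSpace X] [SecondCountableTopology X]
    [MeasurableSpace X] [BorelSpace X]
    [MetricSpace Y] [CompleteSpace Y] [SecondCountableTopology Y]
    [MeasurableSpace Y] [BorelSpace Y]
    [MetricSpace Z] [CompleteSpace Z] [SecondCountableTopology Z]
    [MeasurableSpace Z] [BorelSpace Z]
    (μX : Measure X) (μY : Measure Y) (μZ : Measure Z)
    [IsProbabilityMeasure μX] [IsProbabilityMeasure μY] [IsProbabilityMeasure μZ]
    (FY : X → Y) (BX : Y → X) (FZ : Y → Z) (BY : Z → Y)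
    (hFY : Measurable FY) (hBX : Measurable BX) (hFZ : Measurable FZ) (hBY : Measurable BY)
    (h1 : μX.map (fun x => (x, FY x)) = μY.map (fun y => (BX y, y)))
    (h2 : μY.map (fun y => (y, FZ y)) = μZ.map (fun z => (BY z, z))) :
    μX.map (fun x => (x, FZ (FY x))) = μZ.map (fun z => (BX (BY z), z)) :=
  binding_pairs_compose_general μX μY μZ FY BX FZ BY hFY hBX hFZ hBY h1 h2
end

section
/- Failure of the binding condition for the tent map: let μ be the uniform (Lebesgue) probability measure on [0, 1] and define F : [0, 1] → [0, 1] by F(x) = |2x − 1|. Then F_#μ = μ, but (Id, F)_#μ ≠ (F, Id)_#μ as Borel measures on [0, 1] × [0, 1]; that is, F_#μ = ν and F_#ν = μ hold with ν = μ and B = F, yet the binding constraint (Id, F)_#μ = (B, Id)_#ν fails. -/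
/-!
The tent map `F x = |2x - 1|` pulls `Iic a` back to the interval of length `a` centred at `1/2`,
so it preserves the uniform distribution on `[0, 1]` (compare distribution functions).
The two couplings are told apart by the rectangle `(-∞, 1/4) × (-∞, 1/2)`: no `x < 1/4` has
`F x < 1/2`, whereas every `x ∈ (3/8, 1/2)` has `F x < 1/4`.
-/

open MeasureTheory Set

lemma tent_preimage_Iic (a : ℝ) :
    (fun x : ℝ => |2 * x - 1|) ⁻¹' Iic a = Icc ((1 - a) / 2) ((1 + a) / 2) := by
  ext x
  simp only [mem_preimage, mem_Iic, mem_Icc, abs_le]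
  constructor <;> rintro ⟨h₁, h₂⟩ <;> constructor <;> linarith

lemma tent_preimage_Iio (a : ℝ) :
    (fun x : ℝ => |2 * x - 1|) ⁻¹' Iio a = Ioo ((1 - a) / 2) ((1 + a) / 2) := by
  ext x
  simp only [mem_preimage, mem_Iio, mem_Ioo, abs_lt]
  constructor <;> rintro ⟨h₁, h₂⟩ <;> constructor <;> linarith

lemma map_prodMk_apply_prod {α β γ : Type*} [MeasurableSpace α] [MeasurableSpace β]
    [MeasurableSpace γ] {μ : Measure α} {f : α → β} {g : α → γ} (hf : Measurable f)
    (hg : Measurable g) {s : Set β} {t : Set γ} (hs : MeasurableSet s) (ht : MeasurableSet t) :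
    μ.map (fun x => (f x, g x)) (s ×ˢ t) = μ (f ⁻¹' s ∩ g ⁻¹' t) := by
  rw [Measure.map_apply (hf.prodMk hg) (hs.prod ht), mk_preimage_prod]

lemma map_tent_volume_Icc :
    (volume.restrict (Icc (0 : ℝ) 1)).map (fun x : ℝ => |2 * x - 1|) =
      volume.restrict (Icc (0 : ℝ) 1) := by
  refine Measure.ext_of_Iic _ _ fun a => ?_
  have hIic : Iic a ∩ Icc 0 1 = Icc 0 (min a 1) := by
    ext x
    simp only [mem_inter_iff, mem_Iic, mem_Icc, le_min_iff]
    tauto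
  rw [Measure.map_apply (by fun_prop) measurableSet_Iic, tent_preimage_Iic,
    Measure.restrict_apply measurableSet_Icc, Measure.restrict_apply measurableSet_Iic,
    Icc_inter_Icc, hIic, Real.volume_Icc, Real.volume_Icc, sub_zero]
  congr 1
  rcases le_total a 1 with ha | ha
  · rw [min_eq_left (by linarith : (1 + a) / 2 ≤ 1), max_eq_left (by linarith : 0 ≤ (1 - a) / 2),
      min_eq_left ha]
    ring
  · rw [min_eq_right (by linarith : 1 ≤ (1 + a) / 2), max_eq_right (by linarith : (1 - a) / 2 ≤ 0),
      min_eq_right ha, sub_zero]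

/-- Failure of the binding condition for the tent map: with `μ` the uniform
(Lebesgue) probability measure on `[0, 1]` and `F(x) = |2x − 1|`, one has `F_# μ = μ`, but
`(Id, F)_# μ ≠ (F, Id)_# μ` as Borel measures on the square. -/
theorem tent_map_binding_fails :
    (MeasureTheory.volume.restrict (Set.Icc (0 : ℝ) 1)).map (fun x : ℝ => |2 * x - 1|) =
        MeasureTheory.volume.restrict (Set.Icc (0 : ℝ) 1) ∧
      (MeasureTheory.volume.restrict (Set.Icc (0 : ℝ) 1)).map
          (fun x : ℝ => (x, |2 * x - 1|)) ≠
        (MeasureTheory.volume.restrict (Set.Icc (0 : ℝ) 1)).map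
          (fun x : ℝ => (|2 * x - 1|, x)) := by
  refine ⟨map_tent_volume_Icc, fun h => ?_⟩
  have hF : Measurable fun x : ℝ => |2 * x - 1| := by fun_prop
  have hrect := congrArg (fun m : Measure (ℝ × ℝ) => m (Iio (1 / 4 : ℝ) ×ˢ Iio (1 / 2 : ℝ))) h
  rw [map_prodMk_apply_prod measurable_id' hF measurableSet_Iio measurableSet_Iio,
    map_prodMk_apply_prod hF measurable_id' measurableSet_Iio measurableSet_Iio,
    preimage_id', preimage_id', tent_preimage_Iio, tent_preimage_Iio] at hrect
  have hempty : Iio (1 / 4 : ℝ) ∩ Ioo ((1 - 1 / 2) / 2) ((1 + 1 / 2) / 2) = ∅ := by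
    rw [Iio_inter_Ioo]
    exact Ioo_eq_empty (by norm_num)
  have hhalf : Ioo ((1 - 1 / 4) / 2) ((1 + 1 / 4) / 2) ∩ Iio (1 / 2 : ℝ) ∩ Icc 0 1
      = Ioo (3 / 8) (1 / 2) := by
    ext x
    simp only [mem_inter_iff, mem_Ioo, mem_Iio, mem_Icc]
    constructor
    · rintro ⟨⟨⟨h₁, -⟩, h₂⟩, -⟩
      constructor <;> linarith
    · rintro ⟨h₁, h₂⟩
      refine ⟨⟨⟨?_, ?_⟩, h₂⟩, ?_, ?_⟩ <;> linarith
  rw [hempty, measure_empty, Measure.restrict_apply (by measurability), hhalf,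
    Real.volume_Ioo] at hrect
  norm_num at hrect
end

section
/- Pointwise concentration of the empirical quadratic cost: there is a universal constant C > 0 with the following property. Let (X, μ) and (Y, ν) be complete separable metric spaces with Borel probability measures, let c_X : X × X → ℝ and c_Y : Y × Y → ℝ be measurable with 0 ≤ c_X, c_Y ≤ √(H/4) everywhere for some H > 0, and let F : X → Y and B : Y → X be Borel measurable. For x ∈ X^m and y ∈ Y^n put Ĉ₀(F, B) = (1/(mn)) Σ_{i=1}^m Σ_{j=1}^n (c_X(x_i, B(y_j)) − c_Y(F(x_i), y_j))² and C₀(F, B) = ∫_{X×Y} (c_X(x, B(y)) − c_Y(F(x), y))² d(μ⊗ν). Then for every m, n ≥ 1 and every δ ∈ (0, 1), with probability at least 1 − 4δ under μ^{⊗m} ⊗ ν^{⊗n} (i.e., over i.i.d. samples x₁,…,x_m ∼ μ and y₁,…,y_n ∼ ν), one has |Ĉ₀(F, B) − C₀(F, B)| ≤ C · H · √( log((m ∨ n)/δ) / (m ∧ n) ). -/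
/-!
Let `f(x, y) = (c_X(x, B y) - c_Y(F x, y))²`, with values in `[0, H/4]`, put
`h(x) = ∫ f(x, y) dν(y)` and, for the sample `x`, `k_x(y) = 𝔼ᵢ f(xᵢ, y)`. Then
`Ĉ₀ - C₀ = (𝔼ᵢ h(xᵢ) - ∫ h dμ) + (𝔼ⱼ k_x(yⱼ) - ∫ k_x dν)`.
The first term is a mean of `m` i.i.d. variables with values in `[0, H/4]`; conditionally on `x`,
the second is a mean of `n` such variables. By Hoeffding's inequality each exceeds
`t = (H/2) √(log((m ∨ n)/δ) / (m ∧ n))` in absolute value with probability at most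
`2 exp(-8 log((m ∨ n)/δ)) ≤ 2δ`, so the claim holds with `C = 1`.
-/

open MeasureTheory ProbabilityTheory Real
open scoped ENNReal NNReal BigOperators

lemma sq_sub_mem_Icc {u v r : ℝ} (hu : u ∈ Set.Icc 0 r) (hv : v ∈ Set.Icc 0 r) :
    (u - v) ^ 2 ∈ Set.Icc 0 (r ^ 2) :=
  ⟨sq_nonneg _, sq_le_sq' (by linarith [hu.1, hv.2]) (by linarith [hu.2, hv.1])⟩

lemma Fintype.expect_mem_Icc {ι : Type*} [Fintype ι] [Nonempty ι] {f : ι → ℝ} {a b : ℝ}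
    (hf : ∀ i, f i ∈ Set.Icc a b) : 𝔼 i, f i ∈ Set.Icc a b :=
  ⟨Finset.le_expect Finset.univ_nonempty fun i _ ↦ (hf i).1,
    Finset.expect_le Finset.univ_nonempty fun i _ ↦ (hf i).2⟩

lemma one_div_mul_sum_sum_eq_expect_expect {m n : ℕ} (F : Fin m → Fin n → ℝ) :
    1 / ((m : ℝ) * n) * ∑ i, ∑ j, F i j = 𝔼 i, 𝔼 j, F i j := by
  simp only [Fintype.expect_eq_sum_div_card, Fintype.card_fin, ← Finset.sum_div]
  rw [div_div, one_div_mul_eq_div, mul_comm (m : ℝ)]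

-- With `t = (H/2) √(log(M/δ)/k)` the Hoeffding exponent `-2qt²/(H/4)²` is `-8 (q/k) log(M/δ)`.
lemma exp_hoeffding_exponent_le {H δ M k q : ℝ} (hH : 0 < H) (hδ : 0 < δ) (hδ1 : δ ≤ 1)
    (hM : 1 ≤ M) (hk : 0 < k) (hkq : k ≤ q) :
    exp (-2 * q * (H * √(log (M / δ) / k) / 2) ^ 2 / (H / 4 - 0) ^ 2) ≤ δ := by
  set L := log (M / δ)
  have hL : 0 ≤ L := log_nonneg ((one_le_div hδ).2 (hδ1.trans hM))
  have hexponent : -2 * q * (H * √(L / k) / 2) ^ 2 / (H / 4 - 0) ^ 2 = -(8 * (q / k) * L) := by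
    rw [mul_div_assoc, div_pow, mul_pow, sq_sqrt (div_nonneg hL hk.le)]
    field_simp [hH.ne']
    ring
  calc exp (-2 * q * (H * √(L / k) / 2) ^ 2 / (H / 4 - 0) ^ 2) ≤ exp (-L) := by
        rw [hexponent]; gcongr; nlinarith [(one_le_div hk).2 hkq]
    _ = δ / M := by rw [exp_neg, exp_log (by positivity), inv_div]
    _ ≤ δ := div_le_self hδ.le hM

lemma integral_mem_Icc {α : Type*} [MeasurableSpace α] {μ : Measure α} [IsProbabilityMeasure μ]
    {f : α → ℝ} (hf : Measurable f) {a b : ℝ} (hfab : ∀ x, f x ∈ Set.Icc a b) :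
    ∫ x, f x ∂μ ∈ Set.Icc a b := by
  have hint : Integrable f μ := .of_mem_Icc a b hf.aemeasurable (ae_of_all _ hfab)
  constructor
  · simpa using integral_mono (integrable_const a) hint fun x ↦ (hfab x).1
  · simpa using integral_mono hint (integrable_const b) fun x ↦ (hfab x).2

lemma integral_expect {α ι : Type*} [MeasurableSpace α] {μ : Measure α} (s : Finset ι)
    {f : ι → α → ℝ} (hf : ∀ i ∈ s, Integrable (f i) μ) :
    ∫ a, 𝔼 i ∈ s, f i a ∂μ = 𝔼 i ∈ s, ∫ a, f i a ∂μ := by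
  simp only [Finset.expect_eq_sum_div_card, integral_div, integral_finsetSum s hf]

lemma measure_prod_le_of_forall_measure_prodMk_preimage_le {α β : Type*}
    [MeasurableSpace α] [MeasurableSpace β] {μ : Measure α} {ν : Measure β}
    [IsProbabilityMeasure μ] [SFinite ν] {s : Set (α × β)} (hs : MeasurableSet s) {ε : ℝ≥0∞}
    (h : ∀ x, ν (Prod.mk x ⁻¹' s) ≤ ε) : μ.prod ν s ≤ ε := by
  rw [Measure.prod_apply hs]
  simpa using lintegral_mono h (μ := μ)

lemma ofReal_one_sub_le_measure_of_measure_compl_le {Ω : Type*} [MeasurableSpace Ω]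
    {P : Measure Ω} [IsProbabilityMeasure P] {s : Set Ω} {ε : ℝ} (hε : 0 ≤ ε)
    (h : P sᶜ ≤ ENNReal.ofReal ε) : ENNReal.ofReal (1 - ε) ≤ P s := by
  rw [ENNReal.ofReal_sub _ hε, ENNReal.ofReal_one, tsub_le_iff_right,
    ← measure_univ (μ := P)]
  exact (measure_univ_le_add_compl s).trans (add_le_add_right h _)

section Hoeffding

variable {Ω : Type*} [MeasurableSpace Ω] {ρ : Measure Ω} [IsProbabilityMeasure ρ]

lemma hasSubgaussianMGF_sum_sub_integral {g : Ω → ℝ} (hg : Measurable g) {a b : ℝ}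
    (hgab : ∀ ω, g ω ∈ Set.Icc a b) (n : ℕ) :
    HasSubgaussianMGF (fun ω : Fin n → Ω ↦ ∑ j, (g (ω j) - ∫ x, g x ∂ρ))
      (n * (‖b - a‖₊ / 2) ^ 2) (Measure.pi fun _ ↦ ρ) := by
  have hindep : iIndepFun (fun j (ω : Fin n → Ω) ↦ g (ω j) - ∫ x, g x ∂ρ)
      (Measure.pi fun _ ↦ ρ) :=
    iIndepFun_pi (X := fun _ x ↦ g x - ∫ x, g x ∂ρ) fun _ ↦ (hg.sub_const _).aemeasurable
  have hsub : HasSubgaussianMGF (fun x ↦ g x - ∫ x, g x ∂ρ) ((‖b - a‖₊ / 2) ^ 2) ρ :=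
    hasSubgaussianMGF_of_mem_Icc hg.aemeasurable (ae_of_all _ hgab)
  have hcoord (j : Fin n) : HasSubgaussianMGF (fun ω : Fin n → Ω ↦ g (ω j) - ∫ x, g x ∂ρ)
      ((‖b - a‖₊ / 2) ^ 2) (Measure.pi fun _ ↦ ρ) := by
    refine HasSubgaussianMGF.of_map (X := fun x ↦ g x - ∫ x, g x ∂ρ)
      (Y := fun ω : Fin n → Ω ↦ ω j) (measurable_pi_apply j).aemeasurable ?_
    rwa [(measurePreserving_eval (fun _ ↦ ρ) j).map_eq]
  simpa using HasSubgaussianMGF.sum_of_iIndepFun hindep (s := Finset.univ) fun j _ ↦ hcoord j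

lemma measure_le_abs_expect_sub_integral_le {g : Ω → ℝ} (hg : Measurable g) {a b : ℝ}
    (hgab : ∀ ω, g ω ∈ Set.Icc a b) {n : ℕ} (hn : 0 < n) {t : ℝ} (ht : 0 ≤ t) :
    (Measure.pi fun _ : Fin n ↦ ρ) {ω | t ≤ |𝔼 j, g (ω j) - ∫ x, g x ∂ρ|} ≤
      ENNReal.ofReal (2 * exp (-2 * n * t ^ 2 / (b - a) ^ 2)) := by
  set P := Measure.pi fun _ : Fin n ↦ ρ
  set S : (Fin n → Ω) → ℝ := fun ω ↦ ∑ j, (g (ω j) - ∫ x, g x ∂ρ)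
  have hS := hasSubgaussianMGF_sum_sub_integral (ρ := ρ) hg hgab n
  have hn' : (0 : ℝ) < n := by exact_mod_cast hn
  have hsplit : {ω | t ≤ |𝔼 j, g (ω j) - ∫ x, g x ∂ρ|} ⊆
      {ω | n * t ≤ S ω} ∪ {ω | n * t ≤ (-S) ω} := by
    intro ω hω
    have hmean : 𝔼 j, g (ω j) - ∫ x, g x ∂ρ = (n : ℝ)⁻¹ * S ω := by
      simp only [S, Fintype.expect_eq_sum_div_card, Finset.sum_sub_distrib, Finset.sum_const,
        Finset.card_univ, Fintype.card_fin, nsmul_eq_mul]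
      field_simp
    simp only [Set.mem_ofPred_eq, hmean, abs_mul, abs_inv, Nat.abs_cast] at hω
    rw [le_inv_mul_iff₀ hn'] at hω
    rcases le_abs'.1 hω with h | h
    · exact Or.inr (by simp only [Set.mem_ofPred_eq, Pi.neg_apply]; linarith)
    · exact Or.inl h
  have hexp : -(n * t) ^ 2 / (2 * ↑(n * (‖b - a‖₊ / 2) ^ 2 : ℝ≥0)) =
      -2 * n * t ^ 2 / (b - a) ^ 2 := by
    push_cast
    rw [Real.norm_eq_abs, div_pow, sq_abs]
    rcases eq_or_ne (b - a) 0 with h | h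
    · simp [h]
    · field_simp
  calc P _ ≤ P {ω | n * t ≤ S ω} + P {ω | n * t ≤ (-S) ω} :=
        (measure_mono hsplit).trans (measure_union_le _ _)
    _ ≤ ENNReal.ofReal (exp (-2 * n * t ^ 2 / (b - a) ^ 2)) +
        ENNReal.ofReal (exp (-2 * n * t ^ 2 / (b - a) ^ 2)) := by
      gcongr <;> rw [← hexp, ← ofReal_measureReal]
      exacts [ENNReal.ofReal_le_ofReal (hS.measure_ge_le (by positivity)),
        ENNReal.ofReal_le_ofReal (hS.neg.measure_ge_le (by positivity))]
    _ = _ := by rw [← ENNReal.ofReal_add (by positivity) (by positivity), two_mul]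

end Hoeffding

lemma measure_le_abs_expect_expect_sub_integral_le {α β : Type*} [MeasurableSpace α]
    [MeasurableSpace β] {μ : Measure α} {ν : Measure β} [IsProbabilityMeasure μ]
    [IsProbabilityMeasure ν] {f : α × β → ℝ} (hf : Measurable f)
    {a b : ℝ} (hfab : ∀ z, f z ∈ Set.Icc a b) {m n : ℕ} (hm : 0 < m) (hn : 0 < n)
    {t : ℝ} (ht : 0 ≤ t) :
    ((Measure.pi fun _ : Fin m ↦ μ).prod (Measure.pi fun _ : Fin n ↦ ν))
        {p | 2 * t ≤ |𝔼 i, 𝔼 j, f (p.1 i, p.2 j) - ∫ z, f z ∂(μ.prod ν)|} ≤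
      ENNReal.ofReal (2 * exp (-2 * m * t ^ 2 / (b - a) ^ 2)) +
        ENNReal.ofReal (2 * exp (-2 * n * t ^ 2 / (b - a) ^ 2)) := by
  have : NeZero m := ⟨hm.ne'⟩
  have hslice (x : α) : Measurable fun y ↦ f (x, y) := hf.comp measurable_prodMk_left
  set h : α → ℝ := fun x ↦ ∫ y, f (x, y) ∂ν
  have hh : Measurable h := hf.stronglyMeasurable.integral_prod_right'.measurable
  have hhab (x : α) : h x ∈ Set.Icc a b := integral_mem_Icc (hslice x) fun y ↦ hfab (x, y)
  have hh_int : ∫ x, h x ∂μ = ∫ z, f z ∂(μ.prod ν) :=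
    (integral_prod f (.of_mem_Icc a b hf.aemeasurable (ae_of_all _ hfab))).symm
  set k : (Fin m → α) → β → ℝ := fun x y ↦ 𝔼 i, f (x i, y)
  have hk (x : Fin m → α) : Measurable (k x) := by
    simp only [k, Fintype.expect_eq_sum_div_card]; fun_prop
  have hkab (x : Fin m → α) (y : β) : k x y ∈ Set.Icc a b := Fintype.expect_mem_Icc fun i ↦ hfab _
  have hk_int (x : Fin m → α) : ∫ y, k x y ∂ν = 𝔼 i, h (x i) :=
    integral_expect _ fun i _ ↦
      .of_mem_Icc a b (hslice _).aemeasurable (ae_of_all _ fun y ↦ hfab _)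
  set E₁ := {x : Fin m → α | t ≤ |𝔼 i, h (x i) - ∫ x, h x ∂μ|}
  set E₂ := {p : (Fin m → α) × (Fin n → β) | t ≤ |𝔼 j, k p.1 (p.2 j) - ∫ y, k p.1 y ∂ν|}
  have hE₂ : MeasurableSet E₂ := by
    simp only [E₂, hk_int]
    simp only [k, Fintype.expect_eq_sum_div_card]
    exact measurableSet_le measurable_const (by fun_prop)
  have hsplit : {p : (Fin m → α) × (Fin n → β) |
      2 * t ≤ |𝔼 i, 𝔼 j, f (p.1 i, p.2 j) - ∫ z, f z ∂(μ.prod ν)|} ⊆ E₁ ×ˢ Set.univ ∪ E₂ := by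
    intro p hp
    have hdecomp : 𝔼 i, 𝔼 j, f (p.1 i, p.2 j) - ∫ z, f z ∂(μ.prod ν) =
        (𝔼 i, h (p.1 i) - ∫ x, h x ∂μ) + (𝔼 j, k p.1 (p.2 j) - ∫ y, k p.1 y ∂ν) := by
      rw [hk_int, hh_int, Finset.expect_comm]
      ring
    by_contra! hnot
    simp only [Set.mem_union, Set.mem_prod, Set.mem_univ, and_true, not_or] at hnot
    have := abs_add_le (𝔼 i, h (p.1 i) - ∫ x, h x ∂μ) (𝔼 j, k p.1 (p.2 j) - ∫ y, k p.1 y ∂ν)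
    simp only [E₁, E₂, Set.mem_ofPred_eq, not_le, hdecomp] at hnot hp
    linarith [hnot.1, hnot.2]
  calc _ ≤ _ := measure_mono hsplit
    _ ≤ _ := measure_union_le _ _
    _ ≤ _ := by
      gcongr
      · rw [Measure.prod_prod, measure_univ, mul_one]
        exact measure_le_abs_expect_sub_integral_le hh hhab hm ht
      · exact measure_prod_le_of_forall_measure_prodMk_preimage_le hE₂ fun x ↦
          measure_le_abs_expect_sub_integral_le (hk x) (hkab x) hn ht

/-- Pointwise concentration of the empirical quadratic cost: there is a
universal constant `C > 0` such that, for all Polish probability spaces, bounded costs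
(taking values in `[0, √(H/4)]`), measurable `F, B`, sample sizes `m, n ≥ 1` and
`δ ∈ (0, 1)`, with probability at least `1 − 4δ` over i.i.d. samples,
`|Ĉ₀(F, B) − C₀(F, B)| ≤ C · H · √(log((m ∨ n)/δ) / (m ∧ n))`. -/
theorem empirical_quadratic_cost_concentration :
    ∃ C : ℝ, 0 < C ∧
      ∀ (X Y : Type)
        [MetricSpace X] [CompleteSpace X] [SecondCountableTopology X]
        [MeasurableSpace X] [BorelSpace X]
        [MetricSpace Y] [CompleteSpace Y] [SecondCountableTopology Y]
        [MeasurableSpace Y] [BorelSpace Y]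
        (μ : Measure X) (ν : Measure Y),
        IsProbabilityMeasure μ → IsProbabilityMeasure ν →
        ∀ (cX : X → X → ℝ) (cY : Y → Y → ℝ) (H : ℝ), 0 < H →
        Measurable (Function.uncurry cX) → Measurable (Function.uncurry cY) →
        (∀ x x', 0 ≤ cX x x' ∧ cX x x' ≤ Real.sqrt (H / 4)) →
        (∀ y y', 0 ≤ cY y y' ∧ cY y y' ≤ Real.sqrt (H / 4)) →
        ∀ (F : X → Y) (B : Y → X), Measurable F → Measurable B →
        ∀ (m n : ℕ), 1 ≤ m → 1 ≤ n →
        ∀ δ : ℝ, 0 < δ → δ < 1 →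
        ENNReal.ofReal (1 - 4 * δ) ≤
          ((Measure.pi fun _ : Fin m => μ).prod (Measure.pi fun _ : Fin n => ν))
            {p : (Fin m → X) × (Fin n → Y) |
              |(1 / ((m : ℝ) * n)) *
                    (∑ i : Fin m, ∑ j : Fin n,
                      (cX (p.1 i) (B (p.2 j)) - cY (F (p.1 i)) (p.2 j)) ^ 2) -
                  ∫ z, (cX z.1 (B z.2) - cY (F z.1) z.2) ^ 2 ∂(μ.prod ν)| ≤
                C * H * Real.sqrt (Real.log ((max m n : ℝ) / δ) / (min m n : ℝ))} := by
  refine ⟨1, one_pos, fun X Y _ _ _ _ _ _ _ _ _ _ μ ν _ _ cX cY H hH hcX hcY hcXb hcYb F B hF hB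
    m n hm hn δ hδ hδ1 ↦ ?_⟩
  set f : X × Y → ℝ := fun z ↦ (cX z.1 (B z.2) - cY (F z.1) z.2) ^ 2
  have hf : Measurable f :=
    ((hcX.comp (measurable_fst.prodMk (hB.comp measurable_snd))).sub
      (hcY.comp ((hF.comp measurable_fst).prodMk measurable_snd))).pow_const 2
  have hfab (z : X × Y) : f z ∈ Set.Icc 0 (H / 4) := by
    simpa only [sq_sqrt (by positivity : 0 ≤ H / 4)] using
      sq_sub_mem_Icc (hcXb z.1 (B z.2)) (hcYb (F z.1) z.2)
  set k : ℝ := min m n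
  set t := H * √(log ((max m n : ℝ) / δ) / k) / 2
  have hk : 0 < k := lt_min (by exact_mod_cast hm) (by exact_mod_cast hn)
  have hM : (1 : ℝ) ≤ max (m : ℝ) n := le_max_of_le_left (by exact_mod_cast hm)
  have htail (q : ℕ) (hq : k ≤ q) :
      ENNReal.ofReal (2 * exp (-2 * q * t ^ 2 / (H / 4 - 0) ^ 2)) ≤ ENNReal.ofReal (2 * δ) :=
    ENNReal.ofReal_le_ofReal <| mul_le_mul_of_nonneg_left
      (exp_hoeffding_exponent_le hH hδ hδ1.le hM hk hq) zero_le_two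
  have hbad := measure_le_abs_expect_expect_sub_integral_le (μ := μ) (ν := ν) hf hfab hm hn
    (t := t) (by positivity)
  simp only [one_div_mul_sum_sum_eq_expect_expect]
  refine ofReal_one_sub_le_measure_of_measure_compl_le (by positivity) ?_
  calc _ ≤ _ := measure_mono fun p hp ↦
        (by ring : 2 * t = 1 * H * √(log ((max m n : ℝ) / δ) / k)).trans_le (not_le.1 hp).le
    _ ≤ _ := hbad
    _ ≤ ENNReal.ofReal (2 * δ) + ENNReal.ofReal (2 * δ) :=
      add_le_add (htail m (min_le_left _ _)) (htail n (min_le_right _ _))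
    _ = ENNReal.ofReal (4 * δ) := by
      rw [← ENNReal.ofReal_add (by positivity) (by positivity)]; ring_nf
end
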